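/- Let M be a type and let σ and τ be observational strategies over M. If σ ≤_os τ and τ ≤_os σ, then σ = τ. -/
import Mathlib

namespace GaLoP

/-- A set `S` of finite sequences over `M` is deterministic if any two members
of `S` extending a common sequence `t` by one element agree on that element. -/
def Deterministic {M : Type} (S : Set (List M)) : Prop :=
  ∀ (t : List M) (o₁ o₂ : M), t ++ [o₁] ∈ S → t ++ [o₂] ∈ S → o₁ = o₂

/-- An observational strategy over `M`: a family of deterministic sets of finite
sequences over `M` such that any two distinct members first differ at an
appended element. -/
def ObservationalStrategy {M : Type} (σ : Set (Set (List M))) : Prop :=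
  (∀ S ∈ σ, Deterministic S) ∧
  (∀ S ∈ σ, ∀ T ∈ σ, S ≠ T →
    ∃ (t : List M) (o₁ o₂ : M), o₁ ≠ o₂ ∧ t ++ [o₁] ∈ S ∧ t ++ [o₂] ∈ T)

/-- σ ≤_os τ : for every S ∈ σ there exists T ∈ τ with T ⊆ S. -/
def leOS {M : Type} (σ τ : Set (Set (List M))) : Prop :=
  ∀ S ∈ σ, ∃ T ∈ τ, T ⊆ S

lemma subset_aux {M : Type} (σ τ : Set (Set (List M)))
    (hσ : ObservationalStrategy σ) (hστ : leOS σ τ) (hτσ : leOS τ σ) : σ ⊆ τ := by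
  intro S hS
  obtain ⟨T, hT, hTS⟩ := hστ S hS
  obtain ⟨S', hS', hS'T⟩ := hτσ T hT
  have hS'S : S' = S := by
    by_contra hne
    obtain ⟨t, o₁, o₂, hoo, h₁, h₂⟩ := hσ.2 S hS S' hS' (Ne.symm hne)
    exact hoo (hσ.1 S hS t o₁ o₂ h₁ (hTS (hS'T h₂)))
  have : T = S := le_antisymm hTS (hS'S ▸ hS'T)
  exact this ▸ hT

/-- ≤_os is antisymmetric on observational strategies. -/
theorem leOS_antisymm {M : Type} (σ τ : Set (Set (List M)))
    (hσ : ObservationalStrategy σ) (hτ : ObservationalStrategy τ)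
    (hστ : leOS σ τ) (hτσ : leOS τ σ) : σ = τ :=
  le_antisymm (subset_aux σ τ hσ hστ hτσ) (subset_aux τ σ hτ hτσ hστ)

end GaLoP
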